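/- Let f be a good càdlàg function on [0,T] without negative jumps, and let (l_1, r_1), (l_2, r_2) be excursion intervals of f with l_1 < l_2. Then r_1 < l_2; in particular, distinct excursion intervals of a good function are disjoint and not nested. -/

import Mathlib

open MeasureTheory

/-- `(l, r)` is an excursion interval of `f` (on `[0, T]`): a nonempty interval
with `f(l−) = f(r−) = inf_{t ≤ r} f(t)` and `f(t) > inf_{s ≤ l} f(s)` on `(l,r)`. -/
def ExcursionInterval (f : ℝ → ℝ) (T l r : ℝ) : Prop :=
  0 ≤ l ∧ l < r ∧ r ≤ T ∧
  Function.leftLim f l = sInf (f '' Set.Icc 0 r) ∧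
  Function.leftLim f r = sInf (f '' Set.Icc 0 r) ∧
  ∀ t ∈ Set.Ioo l r, sInf (f '' Set.Icc 0 l) < f t

/-- The set `Y(f)` of right endpoints of excursion intervals of `f` on `[0,T]`. -/
def ExcEndpoints (f : ℝ → ℝ) (T : ℝ) : Set ℝ :=
  {r | ∃ l, ExcursionInterval f T l r}

/-- `f` is good on `[0,T]`: `Y(f)` has no isolated points, the complement of the
union of the excursion intervals in `[0, sup Y(f)]` is Lebesgue null, and `f` has
no local minimum at any point of `Y(f)`. -/
def GoodOn (f : ℝ → ℝ) (T : ℝ) : Prop :=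
  (∀ r ∈ ExcEndpoints f T, r ∈ closure (ExcEndpoints f T \ {r})) ∧
  volume (Set.Icc 0 (sSup (ExcEndpoints f T)) \
    ⋃ (l : ℝ) (r : ℝ) (_ : ExcursionInterval f T l r), Set.Ioo l r) = 0 ∧
  ∀ r ∈ ExcEndpoints f T, ¬ IsLocalMin f r

/-!
Suppose `l₂ ≤ r₁`. Then `(l₁, l₂)` is itself an excursion interval: it is `(l₁, r₁)` if `l₂ = r₁`,
and otherwise `(l₁, r₁)` may be cut at `l₂` because `f(l₂−)` equals the running infimum
`m(l₂) = inf_{[0, l₂]} f`. If moreover `f(l₂) = m(l₂)`, then `f > m(l₂)` on `(l₁, l₂)` and on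
`(l₂, r₂)` makes `l₂` a local minimum, which a good function does not have at an endpoint.

So everything rests on `f(r) = m(r) = f(r−)` at every right endpoint `r` of an excursion `(l, r)`.
If instead `f(r) > m(r)`, let `A` be the set of right endpoints lying in `(l, r]`. Every point of
`A` is a jump of `f`, so right-continuity keeps endpoints away from it on the right; as endpoints
are not isolated, every point of `A` is then a limit of `A` from the left; and every limit of `A`
from the left lies in `A`, since `(l, r)` may be cut there. No nonempty set of reals has these three
properties: its closure is perfect, yet every point of the closure is isolated from the closure on
one side, so the closure is countable.
-/

open Set Filter Function Topology

theorem IsCompact.bddBelow_image_of_isBoundedUnder {X α : Type*} [TopologicalSpace X]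
    [LinearOrder α] [Nonempty α] {K : Set X} {f : X → α} (hK : IsCompact K)
    (hf : ∀ x ∈ K, IsBoundedUnder (· ≥ ·) (𝓝 x) f) : BddBelow (f '' K) := by
  refine hK.induction_on (p := fun s => BddBelow (f '' s)) (by simp)
    (fun s t hst ht => ht.mono (image_mono hst))
    (fun s t hs ht => by rw [image_union]; exact hs.union ht) fun x hx => ?_
  obtain ⟨b, hb⟩ := hf x hx
  exact ⟨{y | b ≤ f y}, mem_nhdsWithin_of_mem_nhds hb, b, by rintro _ ⟨y, hy, rfl⟩; exact hy⟩

theorem Filter.Eventually.notMem_closure_nhdsWithin {X : Type*} [TopologicalSpace X]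
    {s A : Set X} {x : X} (hs : IsOpen s) (h : ∀ᶠ z in 𝓝[s] x, z ∉ A) :
    ∀ᶠ z in 𝓝[s] x, z ∉ closure A := by
  filter_upwards [eventually_eventually_nhdsWithin.2 h, self_mem_nhdsWithin] with z hz hzs
  rw [hs.nhdsWithin_eq hzs] at hz
  rw [mem_closure_iff_frequently, not_frequently]
  exact hz

theorem eq_empty_of_mem_iff_frequently_nhdsLT {A : Set ℝ}
    (hright : ∀ x ∈ A, ∀ᶠ z in 𝓝[>] x, z ∉ A)
    (hleft : ∀ x, x ∈ A ↔ ∃ᶠ z in 𝓝[<] x, z ∈ A) : A = ∅ := by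
  rw [← not_nonempty_iff_eq_empty]
  intro hne
  have hperf : Perfect (closure A) := Preperfect.perfect_closure fun x hx =>
    accPt_iff_frequently_nhdsNE.2
      (((hleft x).1 hx).filter_mono (nhdsWithin_mono _ fun _ h => ne_of_lt h))
  have hcount : (closure A).Countable := by
    refine (countable_setOfPred_isolated_right_within (s := closure A)).union
      (countable_setOfPred_isolated_left_within (s := closure A)) |>.mono fun x hx => ?_
    by_cases hxA : x ∈ A
    · left
      refine ⟨hx, ?_⟩
      rw [inter_comm, nhdsWithin_inter', inf_principal_eq_bot]
      exact (hright x hxA).notMem_closure_nhdsWithin isOpen_Ioi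
    · right
      refine ⟨hx, ?_⟩
      rw [inter_comm, nhdsWithin_inter', inf_principal_eq_bot]
      exact (not_frequently.1 (mt (hleft x).2 hxA)).notMem_closure_nhdsWithin isOpen_Iio
  obtain ⟨F, hF, -, hFinj⟩ :=
    hperf.exists_nat_bool_injection (hne.mono subset_closure)
  have := (hcount.mono hF).to_subtype
  have hCantor : Countable (ℕ → Bool) := (rangeFactorization_injective.2 hFinj).countable
  rw [← Cardinal.mk_le_aleph0_iff] at hCantor
  exact Cardinal.aleph0_lt_continuum.not_ge (by simpa using hCantor)

section Cadlag

variable {f : ℝ → ℝ}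

theorem bddBelow_image_of_cadlag (hright : ∀ x, ContinuousWithinAt f (Ici x) x)
    (hleft : ∀ x, Tendsto f (𝓝[<] x) (𝓝 (leftLim f x))) {K : Set ℝ} (hK : IsCompact K) :
    BddBelow (f '' K) :=
  hK.bddBelow_image_of_isBoundedUnder fun x _ => by
    rw [← nhdsLT_sup_nhdsGE, IsBoundedUnder, map_sup]
    exact isBounded_sup (hleft x).isBoundedUnder_ge (hright x).tendsto.isBoundedUnder_ge

theorem eventually_le_leftLim_nhdsLT (hleft : ∀ x, Tendsto f (𝓝[<] x) (𝓝 (leftLim f x)))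
    {x c : ℝ} (h : ∀ᶠ t in 𝓝[<] x, c ≤ f t) : ∀ᶠ z in 𝓝[<] x, c ≤ leftLim f z := by
  filter_upwards [eventually_eventually_nhdsWithin.2 h, self_mem_nhdsWithin] with z hz hzx
  exact ge_of_tendsto (hleft z) (nhdsWithin_mono z (Iio_subset_Iio (le_of_lt hzx)) hz)

theorem leftLim_le_of_frequently (hleft : ∀ x, Tendsto f (𝓝[<] x) (𝓝 (leftLim f x)))
    {x c : ℝ} (h : ∃ᶠ z in 𝓝[<] x, leftLim f z ≤ c) : leftLim f x ≤ c := by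
  by_contra! hc
  have hf : ∀ᶠ t in 𝓝[<] x, (c + leftLim f x) / 2 ≤ f t :=
    (hleft x).eventually (eventually_ge_nhds (by linarith))
  obtain ⟨z, hz, hz'⟩ := (h.and_eventually (eventually_le_leftLim_nhdsLT hleft hf)).exists
  linarith

theorem eventually_lt_leftLim_nhdsGT (hright : ∀ x, ContinuousWithinAt f (Ici x) x)
    (hleft : ∀ x, Tendsto f (𝓝[<] x) (𝓝 (leftLim f x))) {x c : ℝ} (h : c < f x) :
    ∀ᶠ z in 𝓝[>] x, c < leftLim f z := by
  have hf : ∀ᶠ t in 𝓝[>] x, (c + f x) / 2 ≤ f t :=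
    nhdsWithin_mono x Ioi_subset_Ici_self
      ((hright x).eventually (eventually_ge_nhds (by linarith)))
  filter_upwards [eventually_eventually_nhdsWithin.2 hf, self_mem_nhdsWithin] with z hz hxz
  rw [isOpen_Ioi.nhdsWithin_eq hxz] at hz
  have := ge_of_tendsto (hleft z) (hz.filter_mono nhdsWithin_le_nhds)
  linarith

end Cadlag

section Excursions

variable {f : ℝ → ℝ} {T : ℝ}

theorem sInf_image_Icc_le_of_le {a b : ℝ} (hb : BddBelow (f '' Icc 0 b)) (ha : 0 ≤ a)
    (hab : a ≤ b) : sInf (f '' Icc 0 b) ≤ sInf (f '' Icc 0 a) :=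
  csInf_le_csInf hb ⟨f a, a, ⟨ha, le_rfl⟩, rfl⟩ (image_mono (Icc_subset_Icc_right hab))

theorem eventually_notMem_excEndpoints_nhdsGT (hright : ∀ x, ContinuousWithinAt f (Ici x) x)
    (hleft : ∀ x, Tendsto f (𝓝[<] x) (𝓝 (leftLim f x))) (hbdd : ∀ r, BddBelow (f '' Icc 0 r))
    {x : ℝ} (hx : 0 ≤ x) (hfx : sInf (f '' Icc 0 x) < f x) :
    ∀ᶠ z in 𝓝[>] x, z ∉ ExcEndpoints f T := by
  filter_upwards [eventually_lt_leftLim_nhdsGT hright hleft hfx, self_mem_nhdsWithin]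
    with z hz hxz ⟨_, hz_exc⟩
  rw [hz_exc.2.2.2.2.1] at hz
  exact (sInf_image_Icc_le_of_le (hbdd z) hx (le_of_lt hxz)).not_gt hz

namespace ExcursionInterval

variable {l r : ℝ}

theorem sInf_image_Icc_eq (hleft : ∀ x, Tendsto f (𝓝[<] x) (𝓝 (leftLim f x)))
    (hbdd : ∀ r, BddBelow (f '' Icc 0 r)) (h : ExcursionInterval f T l r) {x : ℝ}
    (hlx : l ≤ x) (hxr : x ≤ r) : sInf (f '' Icc 0 x) = sInf (f '' Icc 0 r) := by
  obtain ⟨hl, hlr, -, -, hleftLim_r, hpos⟩ := h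
  have hlr' : sInf (f '' Icc 0 l) ≤ sInf (f '' Icc 0 r) := by
    rw [← hleftLim_r]
    exact ge_of_tendsto (hleft r)
      (mem_of_superset (Ioo_mem_nhdsLT hlr) fun t ht => (hpos t ht).le)
  refine le_antisymm ?_ (sInf_image_Icc_le_of_le (hbdd r) (hl.trans hlx) hxr)
  exact (sInf_image_Icc_le_of_le (hbdd x) hl hlx).trans hlr'

theorem leftLim_left_eq (hleft : ∀ x, Tendsto f (𝓝[<] x) (𝓝 (leftLim f x)))
    (hbdd : ∀ r, BddBelow (f '' Icc 0 r)) (h : ExcursionInterval f T l r) :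
    leftLim f l = sInf (f '' Icc 0 l) := by
  rw [h.2.2.2.1, h.sInf_image_Icc_eq hleft hbdd le_rfl h.2.1.le]

theorem of_leftLim_eq (hleft : ∀ x, Tendsto f (𝓝[<] x) (𝓝 (leftLim f x)))
    (hbdd : ∀ r, BddBelow (f '' Icc 0 r)) (h : ExcursionInterval f T l r) {x : ℝ}
    (hlx : l < x) (hxr : x ≤ r) (hx : leftLim f x = sInf (f '' Icc 0 x)) :
    ExcursionInterval f T l x := by
  refine ⟨h.1, hlx, hxr.trans h.2.2.1, ?_, hx, fun t ht => h.2.2.2.2.2 t ⟨ht.1, ht.2.trans_le hxr⟩⟩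
  rw [h.sInf_image_Icc_eq hleft hbdd hlx.le hxr]
  exact h.2.2.2.1

theorem isLocalMin_of_apply_eq (hleft : ∀ x, Tendsto f (𝓝[<] x) (𝓝 (leftLim f x)))
    (hbdd : ∀ r, BddBelow (f '' Icc 0 r)) {ρ : ℝ} (h : ExcursionInterval f T l r)
    (h' : ExcursionInterval f T r ρ) (hr : f r = sInf (f '' Icc 0 r)) : IsLocalMin f r := by
  have hm := h.sInf_image_Icc_eq hleft hbdd le_rfl h.2.1.le
  filter_upwards [Ioo_mem_nhds h.2.1 h'.2.1] with t ht
  rcases lt_trichotomy t r with htr | rfl | hrt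
  · rw [hr, ← hm]
    exact (h.2.2.2.2.2 t ⟨ht.1, htr⟩).le
  · exact le_rfl
  · rw [hr]
    exact (h'.2.2.2.2.2 t ⟨hrt, ht.2⟩).le

theorem mem_of_frequently_nhdsLT (hleft : ∀ x, Tendsto f (𝓝[<] x) (𝓝 (leftLim f x)))
    (hbdd : ∀ r, BddBelow (f '' Icc 0 r)) (h : ExcursionInterval f T l r) {x : ℝ}
    (hx : ∃ᶠ z in 𝓝[<] x, z ∈ Ioc l r ∩ ExcEndpoints f T) :
    x ∈ Ioc l r ∩ ExcEndpoints f T := by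
  have hm : ∀ z ∈ Icc l r, sInf (f '' Icc 0 z) = sInf (f '' Icc 0 r) := fun z hz =>
    h.sInf_image_Icc_eq hleft hbdd hz.1 hz.2
  obtain ⟨z, hzA, hzx⟩ := (hx.and_eventually self_mem_nhdsWithin).exists
  have hlx : l < x := hzA.1.1.trans hzx
  have hxr : x ≤ r := by
    by_contra! hrx
    obtain ⟨z, hzA, hz⟩ := (hx.and_eventually (Ioo_mem_nhdsLT hrx)).exists
    exact hz.1.not_ge hzA.1.2
  have hle : leftLim f x ≤ sInf (f '' Icc 0 r) := leftLim_le_of_frequently hleft <|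
    hx.mono fun z ⟨hz, _, hz_exc⟩ => by rw [hz_exc.2.2.2.2.1, hm z (Ioc_subset_Icc_self hz)]
  have hge : sInf (f '' Icc 0 r) ≤ leftLim f x := by
    rw [← hm l ⟨le_rfl, h.2.1.le⟩]
    exact ge_of_tendsto (hleft x) (mem_of_superset (Ioo_mem_nhdsLT hlx)
      fun t ht => (h.2.2.2.2.2 t ⟨ht.1, ht.2.trans_le hxr⟩).le)
  refine ⟨⟨hlx, hxr⟩, l, h.of_leftLim_eq hleft hbdd hlx hxr ?_⟩
  rw [hm x ⟨hlx.le, hxr⟩]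
  exact le_antisymm hle hge

theorem apply_right_eq_sInf (hright : ∀ x, ContinuousWithinAt f (Ici x) x)
    (hleft : ∀ x, Tendsto f (𝓝[<] x) (𝓝 (leftLim f x))) (hbdd : ∀ r, BddBelow (f '' Icc 0 r))
    (hperf : ∀ r ∈ ExcEndpoints f T, r ∈ closure (ExcEndpoints f T \ {r}))
    (h : ExcursionInterval f T l r) : f r = sInf (f '' Icc 0 r) := by
  refine le_antisymm (not_lt.1 fun hfr => ?_)
    (csInf_le (hbdd r) ⟨r, ⟨h.1.trans h.2.1.le, le_rfl⟩, rfl⟩)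
  set A := Ioc l r ∩ ExcEndpoints f T
  have hA_right : ∀ x ∈ A, ∀ᶠ z in 𝓝[>] x, z ∉ ExcEndpoints f T := by
    rintro x ⟨⟨hlx, hxr⟩, -⟩
    refine eventually_notMem_excEndpoints_nhdsGT hright hleft hbdd (h.1.trans hlx.le) ?_
    rw [h.sInf_image_Icc_eq hleft hbdd hlx.le hxr]
    rcases hxr.eq_or_lt with rfl | hxr
    · exact hfr
    · rw [← h.sInf_image_Icc_eq hleft hbdd le_rfl h.2.1.le]
      exact h.2.2.2.2.2 x ⟨hlx, hxr⟩
  have hA_left : ∀ x ∈ A, ∃ᶠ z in 𝓝[<] x, z ∈ A := by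
    intro x hx
    have hY := mem_closure_ne_iff_frequently_within.1 (hperf x hx.2)
    rw [← nhdsLT_sup_nhdsGT, frequently_sup] at hY
    exact ((hY.resolve_right (not_frequently.2 (hA_right x hx))).and_eventually
      (Ioo_mem_nhdsLT hx.1.1)).mono fun z hz => ⟨⟨hz.2.1, hz.2.2.le.trans hx.1.2⟩, hz.1⟩
  have hA_empty : A = ∅ := eq_empty_of_mem_iff_frequently_nhdsLT
    (fun x hx => (hA_right x hx).mono fun z hz hzA => hz hzA.2)
    fun x => ⟨hA_left x, h.mem_of_frequently_nhdsLT hleft hbdd⟩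
  exact eq_empty_iff_forall_notMem.1 hA_empty r ⟨⟨h.2.1, le_rfl⟩, l, h⟩

end ExcursionInterval

end Excursions

theorem stmt14_general (f : ℝ → ℝ) (T : ℝ)
    (hright : ∀ x : ℝ, ContinuousWithinAt f (Set.Ici x) x)
    (hleft : ∀ x : ℝ, Filter.Tendsto f (nhdsWithin x (Set.Iio x))
      (nhds (Function.leftLim f x)))
    (hgood : GoodOn f T)
    (l₁ r₁ l₂ r₂ : ℝ)
    (h₁ : ExcursionInterval f T l₁ r₁) (h₂ : ExcursionInterval f T l₂ r₂)
    (hl : l₁ < l₂) :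
    r₁ < l₂ := by
  have hbdd : ∀ r, BddBelow (f '' Icc 0 r) := fun r =>
    bddBelow_image_of_cadlag hright hleft isCompact_Icc
  by_contra! hle
  have h₁₂ : ExcursionInterval f T l₁ l₂ := by
    rcases hle.eq_or_lt with rfl | hlt
    · exact h₁
    · exact h₁.of_leftLim_eq hleft hbdd hl hlt.le (h₂.leftLim_left_eq hleft hbdd)
  have hf : f l₂ = sInf (f '' Icc 0 l₂) := h₁₂.apply_right_eq_sInf hright hleft hbdd hgood.1
  exact hgood.2.2 l₂ ⟨l₁, h₁₂⟩ (h₁₂.isLocalMin_of_apply_eq hleft hbdd h₂ hf)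

/-- Excursion intervals of a good function are not nested: if `l₁ < l₂` then
`r₁ < l₂`. -/
theorem stmt14 (f : ℝ → ℝ) (T : ℝ)
    (hright : ∀ x : ℝ, ContinuousWithinAt f (Set.Ici x) x)
    (hleft : ∀ x : ℝ, Filter.Tendsto f (nhdsWithin x (Set.Iio x))
      (nhds (Function.leftLim f x)))
    (hnonegjump : ∀ t : ℝ, Function.leftLim f t ≤ f t)
    (hgood : GoodOn f T)
    (l₁ r₁ l₂ r₂ : ℝ)
    (h₁ : ExcursionInterval f T l₁ r₁) (h₂ : ExcursionInterval f T l₂ r₂)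
    (hl : l₁ < l₂) :
    r₁ < l₂ :=
  stmt14_general f T hright hleft hgood l₁ r₁ l₂ r₂ h₁ h₂ hl
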